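/- arXiv:2202.05494 — 4 statements merged into one kernel-verified Lean document; each statement's English description precedes it below -/
import Mathlib

section
/- Let 0 < M < 1 and define ω = (1/(2√M)) · ln((1+√M)/(1-√M)). Then ω > 0 and the denominator √M + 1 - (1-√M)e^{2√M t} of z(t) = √M · (√M + 1 + (1-√M)e^{2√M t}) / (√M + 1 - (1-√M)e^{2√M t}) is strictly positive for t ∈ [0, ω) and vanishes at t = ω; consequently z(t) → +∞ as t → ω⁻. -/
/-!
With `s = √M ∈ (0, 1)`, the denominator `(s + 1) - (1 - s) e^{2 s t}` is strictly decreasing in `t`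
and vanishes exactly where `e^{2 s t} = (1 + s) / (1 - s)`, i.e. at `t = ω`. The numerator stays
positive, so near `ω⁻` the quotient is a positive quantity divided by one tending to `0⁺`.
-/

open Filter Topology Real

theorem tendsto_div_atTop_of_pos_of_nhdsGT_zero {α : Type*} {l : Filter α} {f g : α → ℝ} {a : ℝ}
    (ha : 0 < a) (hf : Tendsto f l (𝓝 a)) (hg : Tendsto g l (𝓝[>] 0)) :
    Tendsto (fun x => f x / g x) l atTop := by
  simp only [div_eq_mul_inv]
  exact hf.pos_mul_atTop ha (tendsto_inv_nhdsGT_zero.comp hg)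

section ExpDenominator

variable {a b c : ℝ}

theorem sub_mul_exp_pos_of_lt (ha : 0 < a) (hb : 0 < b) (hc : 0 < c) {t : ℝ}
    (ht : t < 1 / c * log (a / b)) : 0 < a - b * exp (c * t) := by
  rw [one_div_mul_eq_div, lt_div_iff₀' hc, lt_log_iff_exp_lt (div_pos ha hb),
    lt_div_iff₀' hb] at ht
  linarith

theorem sub_mul_exp_one_div_mul_log_eq_zero (ha : 0 < a) (hb : 0 < b) (hc : c ≠ 0) :
    a - b * exp (c * (1 / c * log (a / b))) = 0 := by
  rw [← mul_assoc, mul_one_div_cancel hc, one_mul, exp_log (div_pos ha hb),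
    mul_div_cancel₀ _ hb.ne', sub_self]

theorem tendsto_sub_mul_exp_nhdsGT_zero (ha : 0 < a) (hb : 0 < b) (hc : 0 < c) :
    Tendsto (fun t => a - b * exp (c * t)) (𝓝[<] (1 / c * log (a / b))) (𝓝[>] 0) := by
  set T := 1 / c * log (a / b)
  have hcont : Continuous fun t => a - b * exp (c * t) := by fun_prop
  refine tendsto_nhdsWithin_of_tendsto_nhds_of_eventually_within _ ?_
    (eventually_nhdsWithin_of_forall fun t ht => sub_mul_exp_pos_of_lt ha hb hc ht)
  have hzero : a - b * exp (c * T) = 0 := sub_mul_exp_one_div_mul_log_eq_zero ha hb hc.ne'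
  simpa only [hzero] using (hcont.tendsto T).mono_left nhdsWithin_le_nhds

end ExpDenominator

/-- For `0 < M < 1`, the blow-up time `ω` is positive, the denominator of `z` is positive
on `[0, ω)`, vanishes at `ω`, and `z` blows up to `+∞` as `t → ω⁻`. -/
theorem stmt1 (M : ℝ) (hM0 : 0 < M) (hM1 : M < 1)
    (ω : ℝ) (hω : ω = 1 / (2 * Real.sqrt M) * Real.log ((1 + Real.sqrt M) / (1 - Real.sqrt M)))
    (den z : ℝ → ℝ)
    (hden : ∀ t, den t = Real.sqrt M + 1 - (1 - Real.sqrt M) * Real.exp (2 * Real.sqrt M * t))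
    (hz : ∀ t, z t = Real.sqrt M *
      (Real.sqrt M + 1 + (1 - Real.sqrt M) * Real.exp (2 * Real.sqrt M * t)) / den t) :
    0 < ω ∧ (∀ t ∈ Set.Ico (0:ℝ) ω, 0 < den t) ∧ den ω = 0 ∧
      Filter.Tendsto z (nhdsWithin ω (Set.Iio ω)) Filter.atTop := by
  set s := √M
  have hs : 0 < s := sqrt_pos.mpr hM0
  have hs1 : s < 1 := (sqrt_lt' one_pos).mpr (by linarith)
  have h1s : 0 < 1 - s := sub_pos.mpr hs1
  have h2s : 0 < 2 * s := by positivity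
  rw [add_comm 1 s] at hω
  have hden_eq : den = fun t => s + 1 - (1 - s) * exp (2 * s * t) := funext hden
  have hz_eq : z = fun t => s * (s + 1 + (1 - s) * exp (2 * s * t)) / den t := funext hz
  refine ⟨?_, fun t ht => ?_, ?_, ?_⟩
  · rw [hω]
    exact mul_pos (by positivity) (log_pos ((one_lt_div h1s).mpr (by linarith)))
  · rw [hden]
    exact sub_mul_exp_pos_of_lt (by positivity) h1s h2s (hω ▸ ht.2)
  · rw [hden, hω]
    exact sub_mul_exp_one_div_mul_log_eq_zero (by positivity) h1s h2s.ne'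
  · have hnum : Continuous fun t => s * (s + 1 + (1 - s) * exp (2 * s * t)) := by fun_prop
    rw [hz_eq]
    refine tendsto_div_atTop_of_pos_of_nhdsGT_zero (by positivity)
      ((hnum.tendsto ω).mono_left nhdsWithin_le_nhds) ?_
    rw [hden_eq, hω]
    exact tendsto_sub_mul_exp_nhdsGT_zero (by positivity) h1s h2s
end

section
/- Let α₁ > α₂ > ... > α_r > 0, β_i > 0, p_i > 1, and ψ_i: [0,ω) → ℝ absolutely continuous satisfying ψ̇_i(t) ≥ p_i ψ_{i+1}(t) - α_i ψ_i(t) + β_i - p_i β_{i+1}/α_{i+1} for i = 1,...,r-1, and ψ̇_r(t) ≥ -α_r ψ_r(t) + β_r, with ψ_i(0) > β_i/α_i. Then for all i = 1,...,r and all t ∈ [0,ω): ψ_i(t) ≥ (ψ_i(0) - β_i/α_i) e^{-α_i t} + β_i/α_i > β_i/α_i. -/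
/-- Grönwall-type lower bound for a single differential inequality
`ψ' ≥ -a ψ + b` on `[0, ω)`. -/
lemma gronwall_lower (a b ω : ℝ) (ha : 0 < a) (ψ ψ' : ℝ → ℝ)
    (hder : ∀ t ∈ Set.Ico (0:ℝ) ω, HasDerivAt ψ (ψ' t) t)
    (hineq : ∀ t ∈ Set.Ico (0:ℝ) ω, ψ' t ≥ -a * ψ t + b) :
    ∀ t ∈ Set.Ico (0:ℝ) ω, ψ t ≥ (ψ 0 - b / a) * Real.exp (-a * t) + b / a := by
  set g : ℝ → ℝ := fun t => (ψ t - b / a) * Real.exp (a * t) with hg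
  have hgder : ∀ t ∈ Set.Ico (0:ℝ) ω,
      HasDerivAt g ((ψ' t + a * ψ t - b) * Real.exp (a * t)) t := by
    intro t ht
    have h1 : HasDerivAt (fun t => ψ t - b / a) (ψ' t) t := (hder t ht).sub_const _
    have h2 : HasDerivAt (fun t => Real.exp (a * t)) (a * Real.exp (a * t)) t := by
      have := (Real.hasDerivAt_exp (a * t)).comp t ((hasDerivAt_id t).const_mul a)
      simpa [mul_comm, Function.comp_def] using this
    have := h1.mul h2
    refine this.congr_deriv ?_
    have hab : a * (b / a) = b := by field_simp [ha.ne']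
    linear_combination (-Real.exp (a * t)) * hab
  have hmono : MonotoneOn g (Set.Ico 0 ω) := by
    apply monotoneOn_of_deriv_nonneg (convex_Ico 0 ω)
    · intro t ht
      exact (hgder t ht).continuousAt.continuousWithinAt
    · intro t ht
      rw [interior_Ico] at ht
      exact (hgder t ⟨le_of_lt ht.1, ht.2⟩).differentiableAt.differentiableWithinAt
    · intro t ht
      rw [interior_Ico] at ht
      have ht' : t ∈ Set.Ico (0:ℝ) ω := ⟨le_of_lt ht.1, ht.2⟩
      rw [(hgder t ht').deriv]
      have h3 : ψ' t + a * ψ t - b ≥ 0 := by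
        have := hineq t ht'
        linarith
      positivity
  intro t ht
  have h0 : (0:ℝ) ∈ Set.Ico (0:ℝ) ω := ⟨le_refl 0, lt_of_le_of_lt ht.1 ht.2⟩
  have := hmono h0 ht ht.1
  simp only [hg, mul_zero, Real.exp_zero, mul_one] at this
  -- this : ψ 0 - b / a ≤ (ψ t - b / a) * Real.exp (a * t)
  have hexp : 0 < Real.exp (a * t) := Real.exp_pos _
  have key : (ψ 0 - b / a) * Real.exp (-a * t) ≤ ψ t - b / a := by
    rw [neg_mul, Real.exp_neg]
    rw [mul_inv_le_iff₀ hexp]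
    linarith
  linarith

/-- Step 3 of the proof of the main theorem: the cascade of differential inequalities
for the funnel boundaries `ψ_i` (indexed `0, …, r-1`) admits a uniform exponential
lower bound `ψ_i(t) ≥ (ψ_i(0) - β_i/α_i) e^{-α_i t} + β_i/α_i > β_i/α_i`. -/
theorem stmt5 (r : ℕ) (hr : 1 ≤ r) (ω : ℝ)
    (α β p : ℕ → ℝ) (ψ ψ' : ℕ → ℝ → ℝ)
    (hαpos : ∀ i < r, 0 < α i)
    (hαdec : ∀ i j, i < j → j < r → α j < α i)
    (hβ : ∀ i < r, 0 < β i)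
    (hp : ∀ i, i + 1 < r → 1 < p i)
    (hder : ∀ i < r, ∀ t ∈ Set.Ico (0:ℝ) ω, HasDerivAt (ψ i) (ψ' i t) t)
    (hineq : ∀ i, i + 1 < r → ∀ t ∈ Set.Ico (0:ℝ) ω,
      ψ' i t ≥ p i * ψ (i+1) t - α i * ψ i t + β i - p i * β (i+1) / α (i+1))
    (hlast : ∀ t ∈ Set.Ico (0:ℝ) ω,
      ψ' (r-1) t ≥ -α (r-1) * ψ (r-1) t + β (r-1))
    (hinit : ∀ i < r, ψ i 0 > β i / α i) :
    ∀ i < r, ∀ t ∈ Set.Ico (0:ℝ) ω,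
      ψ i t ≥ (ψ i 0 - β i / α i) * Real.exp (-α i * t) + β i / α i ∧
      ψ i t > β i / α i := by
  -- Key: from such a bound, the strict inequality follows.
  have strict : ∀ i < r, ∀ t ∈ Set.Ico (0:ℝ) ω,
      ψ i t ≥ (ψ i 0 - β i / α i) * Real.exp (-α i * t) + β i / α i →
      ψ i t > β i / α i := by
    intro i hi t _ h
    have h1 : 0 < ψ i 0 - β i / α i := sub_pos.mpr (hinit i hi)
    have h2 : 0 < Real.exp (-α i * t) := Real.exp_pos _
    nlinarith
  -- Backward induction on the distance to the top index r-1.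
  suffices H : ∀ k, ∀ i, i + k + 1 = r → ∀ t ∈ Set.Ico (0:ℝ) ω,
      ψ i t ≥ (ψ i 0 - β i / α i) * Real.exp (-α i * t) + β i / α i by
    intro i hi t ht
    have hk : i + (r - 1 - i) + 1 = r := by omega
    have := H (r - 1 - i) i hk t ht
    exact ⟨this, strict i hi t ht this⟩
  intro k
  induction k with
  | zero =>
    intro i hik
    have hir : i = r - 1 := by omega
    subst hir
    have hlt : r - 1 < r := by omega
    exact gronwall_lower (α (r-1)) (β (r-1)) ω (hαpos _ hlt) (ψ (r-1)) (ψ' (r-1))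
      (hder _ hlt) hlast
  | succ k ih =>
    intro i hik
    have hi1 : i + 1 + k + 1 = r := by omega
    have hi1r : i + 1 < r := by omega
    have hir : i < r := by omega
    have ihs : ∀ t ∈ Set.Ico (0:ℝ) ω, ψ (i+1) t > β (i+1) / α (i+1) := by
      intro t ht
      exact strict (i+1) hi1r t ht (ih (i+1) hi1 t ht)
    apply gronwall_lower (α i) (β i) ω (hαpos i hir) (ψ i) (ψ' i) (hder i hir)
    intro t ht
    have h1 := hineq i hi1r t ht
    have h2 := ihs t ht
    have hp1 : 0 < p i := lt_trans zero_lt_one (hp i hi1r)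
    nlinarith [mul_div_assoc (p i) (β (i+1)) (α (i+1))]
end

section
/- Let α > γ > 0, β, κ, p > 0, and let ψ, φ: [0,ω) → ℝ be positive absolutely continuous functions with ψ̇(t) = p φ(t) - α ψ(t) + κ, φ̇(t) ≥ -γ φ(t) + β, and φ(t) ≥ β/γ for all t. Define M = max{ ψ(0)/φ(0), (pβ + κγ)/(β(α - γ)) }. Then ψ(t)/φ(t) ≤ M for all t ∈ [0,ω). -/
/-! The bound is a barrier argument for `ψ ≤ M φ`. At a time where `ψ = M φ`, the differential
relations together with `φ ≥ β / γ` and the choice of `M ≥ (p β + κ γ) / (β (α - γ))` give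
`ψ' < M φ'`, so `ψ` can never cross the barrier `M φ` from below. -/

open Set

theorem drift_lt_barrier_deriv {α γ β κ p M φ φ' : ℝ} (hγ : 0 < γ) (hβ : 0 < β)
    (hκ : 0 ≤ κ) (hM : 0 < M) (hMbound : p * β + κ * γ ≤ M * (β * (α - γ)))
    (hφlb : β ≤ γ * φ) (hφ' : -γ * φ + β ≤ φ') :
    p * φ - α * (M * φ) + κ < M * φ' := by
  have hgap : κ * γ ≤ (M * (α - γ) - p) * β := by linarith
  have hgap_nonneg : 0 ≤ M * (α - γ) - p := by
    by_contra! h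
    nlinarith [mul_nonneg hκ hγ.le]
  have hκ_le : κ ≤ (M * (α - γ) - p) * φ := by
    have : κ * γ ≤ (M * (α - γ) - p) * φ * γ := by
      nlinarith [mul_le_mul_of_nonneg_left hφlb hgap_nonneg]
    exact le_of_mul_le_mul_right this hγ
  calc p * φ - α * (M * φ) + κ ≤ M * (-γ * φ) := by linarith
    _ < M * (-γ * φ + β) := by nlinarith
    _ ≤ M * φ' := mul_le_mul_of_nonneg_left hφ' hM.le

theorem stmt6_general (α γ β κ p ω M : ℝ)
    (hγ : 0 < γ) (hαγ : γ < α) (hβ : 0 < β) (hκ : 0 < κ) (hp : 0 < p)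
    (ψ φ ψ' φ' : ℝ → ℝ)
    (hφpos : ∀ t ∈ Set.Ico (0:ℝ) ω, 0 < φ t)
    (hψder : ∀ t ∈ Set.Ico (0:ℝ) ω, HasDerivAt ψ (ψ' t) t)
    (hφder : ∀ t ∈ Set.Ico (0:ℝ) ω, HasDerivAt φ (φ' t) t)
    (hψeq : ∀ t ∈ Set.Ico (0:ℝ) ω, ψ' t = p * φ t - α * ψ t + κ)
    (hφineq : ∀ t ∈ Set.Ico (0:ℝ) ω, φ' t ≥ -γ * φ t + β)
    (hφlb : ∀ t ∈ Set.Ico (0:ℝ) ω, φ t ≥ β / γ)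
    (hM : M = max (ψ 0 / φ 0) ((p * β + κ * γ) / (β * (α - γ)))) :
    ∀ t ∈ Set.Ico (0:ℝ) ω, ψ t / φ t ≤ M := by
  intro t ht
  have hsub : Icc 0 t ⊆ Ico 0 ω := Icc_subset_Ico_right ht.2
  have hden : 0 < β * (α - γ) := mul_pos hβ (sub_pos.mpr hαγ)
  have hMbound : (p * β + κ * γ) / (β * (α - γ)) ≤ M := hM ▸ le_max_right _ _
  have hMpos : 0 < M := (div_pos (by positivity) hden).trans_le hMbound
  have hstart : ψ 0 ≤ M * φ 0 :=
    (div_le_iff₀ (hφpos 0 (hsub (left_mem_Icc.mpr ht.1)))).mp (hM ▸ le_max_left _ _)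
  have hbarrier : ∀ x ∈ Icc 0 t, ψ x ≤ M * φ x :=
    image_le_of_deriv_right_lt_deriv_boundary'
      (fun x hx => (hψder x (hsub hx)).continuousAt.continuousWithinAt)
      (fun x hx => (hψder x (Ico_subset_Ico_right ht.2.le hx)).hasDerivWithinAt) hstart
      (fun x hx => ((hφder x (hsub hx)).const_mul M).continuousAt.continuousWithinAt)
      (fun x hx => ((hφder x (Ico_subset_Ico_right ht.2.le hx)).const_mul M).hasDerivWithinAt)
      fun x hx hcross => by
        have hx' : x ∈ Ico 0 ω := Ico_subset_Ico_right ht.2.le hx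
        rw [hψeq x hx', hcross]
        exact drift_lt_barrier_deriv hγ hβ hκ.le hMpos
          ((div_le_iff₀ hden).mp hMbound |>.trans_eq (by ring))
          ((div_le_iff₀' hγ).mp (hφlb x hx')) (hφineq x hx')
  exact (div_le_iff₀ (hφpos t ht)).mpr (hbarrier t (right_mem_Icc.mpr ht.1))

/-- Steps 4–5 of the proof of the main theorem: the ratio `ψ/φ` of consecutive
funnel boundary functions remains bounded by `M`. -/
theorem stmt6 (α γ β κ p ω M : ℝ)
    (hγ : 0 < γ) (hαγ : γ < α) (hβ : 0 < β) (hκ : 0 < κ) (hp : 0 < p)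
    (ψ φ ψ' φ' : ℝ → ℝ)
    (hψpos : ∀ t ∈ Set.Ico (0:ℝ) ω, 0 < ψ t)
    (hφpos : ∀ t ∈ Set.Ico (0:ℝ) ω, 0 < φ t)
    (hψder : ∀ t ∈ Set.Ico (0:ℝ) ω, HasDerivAt ψ (ψ' t) t)
    (hφder : ∀ t ∈ Set.Ico (0:ℝ) ω, HasDerivAt φ (φ' t) t)
    (hψeq : ∀ t ∈ Set.Ico (0:ℝ) ω, ψ' t = p * φ t - α * ψ t + κ)
    (hφineq : ∀ t ∈ Set.Ico (0:ℝ) ω, φ' t ≥ -γ * φ t + β)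
    (hφlb : ∀ t ∈ Set.Ico (0:ℝ) ω, φ t ≥ β / γ)
    (hM : M = max (ψ 0 / φ 0) ((p * β + κ * γ) / (β * (α - γ)))) :
    ∀ t ∈ Set.Ico (0:ℝ) ω, ψ t / φ t ≤ M :=
  stmt6_general α γ β κ p ω M hγ hαγ hβ hκ hp ψ φ ψ' φ' hφpos hψder hφder hψeq hφineq hφlb hM
end

section
/- Let α_j > α_i > 0 for j < i (i.e. α₁ > ... > α_r > 0), and for i ∈ {1,...,r}, j ∈ {i+1,...,r} define ν_{ii} = 1 and ν_{ij} = ∏_{k=i}^{j-1} p_k/(α_k - α_j) with p_k > 0. Suppose μ_i ≥ 0 and absolutely continuous ψ_i: [t₀,t₁) → ℝ satisfy ψ̇_i(t) = p_i ψ_{i+1}(t) - α_i ψ_i(t) + β_i - p_i β_{i+1}/α_{i+1} for i < r, ψ̇_r(t) = -α_r ψ_r(t) + β_r, and ψ_i(t₀) = β_i/α_i + μ_i. Then for all i and all t ∈ [t₀,t₁): ψ_i(t) ≤ β_i/α_i + Σ_{j=i}^{r} μ_j ν_{ij} e^{-α_j (t - t₀)}. -/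
open Finset

lemma expDeriv (c t₀ t : ℝ) :
    HasDerivAt (fun s => Real.exp (c * (s - t₀))) (c * Real.exp (c * (t - t₀))) t := by
  have h : HasDerivAt (fun s : ℝ => c * (s - t₀)) (c * 1) t :=
    ((hasDerivAt_id t).sub_const t₀).const_mul c
  have := h.exp
  convert this using 1
  ring

lemma ode_comp {t₀ t₁ a : ℝ} {v u v' u' : ℝ → ℝ}
    (hv : ∀ t ∈ Set.Ico t₀ t₁, HasDerivAt v (v' t) t)
    (hu : ∀ t ∈ Set.Ico t₀ t₁, HasDerivAt u (u' t) t)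
    (hineq : ∀ t ∈ Set.Ico t₀ t₁, v' t - u' t ≤ -a * (v t - u t))
    (h0 : v t₀ ≤ u t₀) : ∀ t ∈ Set.Ico t₀ t₁, v t ≤ u t := by
  intro t ht
  obtain ⟨ht0, ht1⟩ := ht
  set g : ℝ → ℝ := fun s => Real.exp (a * (s - t₀)) * (v s - u s) with hg
  have hsub : Set.Icc t₀ t ⊆ Set.Ico t₀ t₁ := fun s hs => ⟨hs.1, lt_of_le_of_lt hs.2 ht1⟩
  have hderiv : ∀ s ∈ Set.Ico t₀ t₁,
      HasDerivAt g (Real.exp (a * (s - t₀)) * (a * (v s - u s) + (v' s - u' s))) s := by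
    intro s hs
    have := (expDeriv a t₀ s).fun_mul ((hv s hs).fun_sub (hu s hs))
    exact this.congr_deriv (by ring)
  have mono : AntitoneOn g (Set.Icc t₀ t) := by
    apply antitoneOn_of_hasDerivWithinAt_nonpos (convex_Icc _ _)
      (fun s hs => (hderiv s (hsub hs)).continuousAt.continuousWithinAt)
      (fun s hs => (hderiv s (hsub (interior_subset hs))).hasDerivWithinAt)
    intro s hs
    have h1 := hineq s (hsub (interior_subset hs))
    have h2 : (0:ℝ) < Real.exp (a * (s - t₀)) := Real.exp_pos _
    nlinarith
  have hmt := mono (Set.left_mem_Icc.2 ht0) (Set.right_mem_Icc.2 ht0) ht0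
  have hgt0 : g t₀ = v t₀ - u t₀ := by simp [hg]
  have h2 : (0:ℝ) < Real.exp (a * (t - t₀)) := Real.exp_pos _
  rw [hgt0] at hmt
  have : Real.exp (a * (t - t₀)) * (v t - u t) ≤ 0 := le_trans hmt (by linarith)
  nlinarith

open Finset in
/-- Statement (iii) of Theorem 1: when the saturation is inactive, the funnel boundary
cascade (indexed `0, …, r-1`) satisfies the exponential recovery estimate
`ψ_i(t) ≤ β_i/α_i + Σ_{j=i}^{r-1} μ_j ν_{ij} e^{-α_j (t-t₀)}`, where
`ν_{ij} = ∏_{k=i}^{j-1} p_k/(α_k - α_j)`. -/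
theorem stmt7 (r : ℕ) (hr : 1 ≤ r) (t₀ t₁ : ℝ)
    (α β p μ : ℕ → ℝ) (ψ ψ' : ℕ → ℝ → ℝ)
    (hαpos : ∀ i < r, 0 < α i)
    (hαdec : ∀ i j, i < j → j < r → α j < α i)
    (hβ : ∀ i < r, 0 < β i)
    (hp : ∀ i, i + 1 < r → 0 < p i)
    (hμ : ∀ i < r, 0 ≤ μ i)
    (hder : ∀ i < r, ∀ t ∈ Set.Ico t₀ t₁, HasDerivAt (ψ i) (ψ' i t) t)
    (hode : ∀ i, i + 1 < r → ∀ t ∈ Set.Ico t₀ t₁,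
      ψ' i t = p i * ψ (i+1) t - α i * ψ i t + β i - p i * β (i+1) / α (i+1))
    (hlast : ∀ t ∈ Set.Ico t₀ t₁,
      ψ' (r-1) t = -α (r-1) * ψ (r-1) t + β (r-1))
    (hinit : ∀ i < r, ψ i t₀ = β i / α i + μ i) :
    ∀ i < r, ∀ t ∈ Set.Ico t₀ t₁,
      ψ i t ≤ β i / α i +
        ∑ j ∈ Finset.Ico i r, μ j *
          (∏ k ∈ Finset.Ico i j, p k / (α k - α j)) *
          Real.exp (-α j * (t - t₀)) := by
  -- abbreviations
  have hνpos : ∀ i j, i ≤ j → j < r →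
      0 < ∏ k ∈ Finset.Ico i j, p k / (α k - α j) := by
    intro i j hij hjr
    apply Finset.prod_pos
    intro k hk
    obtain ⟨hk1, hk2⟩ := Finset.mem_Ico.1 hk
    exact div_pos (hp k (by omega)) (sub_pos.2 (hαdec k j hk2 hjr))
  -- the key induction, downward along the cascade
  have key : ∀ d i, i + 1 + d = r → ∀ t ∈ Set.Ico t₀ t₁,
      ψ i t ≤ β i / α i +
        ∑ j ∈ Finset.Ico i r, μ j *
          (∏ k ∈ Finset.Ico i j, p k / (α k - α j)) *
          Real.exp (-α j * (t - t₀)) := by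
    intro d
    induction d with
    | zero =>
      intro i hi t ht
      have hir : i < r := by omega
      have hri : r - 1 = i := by omega
      have hIco : Finset.Ico i r = {i} := by
        rw [show r = i + 1 by omega]; exact Nat.Ico_succ_singleton i
      have hα : (0:ℝ) < α i := hαpos i hir
      -- comparison with u t = β i / α i + μ i * exp (-α i (t - t₀))
      have hu : ∀ t ∈ Set.Ico t₀ t₁, HasDerivAt
          (fun t => β i / α i + μ i * Real.exp (-α i * (t - t₀)))
          (μ i * (-α i * Real.exp (-α i * (t - t₀)))) t := by
        intro t _
        exact ((expDeriv (-α i) t₀ t).const_mul (μ i)).const_add _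
      have := ode_comp (a := α i) (hder i hir) hu ?_ ?_ t ht
      · simpa [hIco] using this
      · intro s hs
        have h1 := hlast s hs
        rw [hri] at h1
        rw [h1]
        have : α i * (β i / α i) = β i := by field_simp
        nlinarith [Real.exp_pos (-α i * (s - t₀))]
      · rw [hinit i hir]; simp
    | succ d ih =>
      intro i hi t ht
      have hir : i < r := by omega
      have hi1r : i + 1 < r := by omega
      have hα : (0:ℝ) < α i := hαpos i hir
      have hα1 : (0:ℝ) < α (i+1) := hαpos (i+1) hi1r
      have hpi : 0 < p i := hp i hi1r
      set ν : ℕ → ℕ → ℝ := fun a b => ∏ k ∈ Finset.Ico a b, p k / (α k - α b) with hν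
      set S : ℝ := ∑ j ∈ Finset.Ico (i+1) r, μ j * ν i j with hS
      have hrec : ∀ j ∈ Finset.Ico (i+1) r, p i * ν (i+1) j = (α i - α j) * ν i j := by
        intro j hj
        obtain ⟨hj1, hj2⟩ := Finset.mem_Ico.1 hj
        have hne : α i - α j ≠ 0 := sub_ne_zero.2 (ne_of_gt (hαdec i j (by omega) hj2))
        have : ν i j = p i / (α i - α j) * ν (i+1) j := by
          rw [hν]; exact Finset.prod_eq_prod_Ico_succ_bot (by omega) _
        rw [this]; field_simp
      have hsplit : ∀ f : ℕ → ℝ, ∑ j ∈ Finset.Ico i r, f j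
          = f i + ∑ j ∈ Finset.Ico (i+1) r, f j :=
        fun f => Finset.sum_eq_sum_Ico_succ_bot hir f
      have hνii : ν i i = 1 := by simp [hν]
      -- the comparison function u
      set u : ℝ → ℝ := fun t => β i / α i +
          ∑ j ∈ Finset.Ico i r, μ j * ν i j * Real.exp (-α j * (t - t₀))
          - S * Real.exp (-α i * (t - t₀)) with hu_def
      set u' : ℝ → ℝ := fun t =>
          (∑ j ∈ Finset.Ico i r, μ j * ν i j * (-α j * Real.exp (-α j * (t - t₀))))
          - S * (-α i * Real.exp (-α i * (t - t₀))) with hu'_def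
      have hu : ∀ t ∈ Set.Ico t₀ t₁, HasDerivAt u (u' t) t := by
        intro t _
        apply HasDerivAt.sub
        · apply HasDerivAt.const_add
          apply HasDerivAt.fun_sum
          intro j _
          exact (expDeriv (-α j) t₀ t).const_mul _
        · exact (expDeriv (-α i) t₀ t).const_mul S
      -- the key algebraic identity
      have hid : ∀ t : ℝ, u' t + α i * u t =
          p i * (β (i+1) / α (i+1) +
            ∑ j ∈ Finset.Ico (i+1) r, μ j * ν (i+1) j * Real.exp (-α j * (t - t₀)))
          + β i - p i * β (i+1) / α (i+1) := by
        intro t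
        have hsum : ∑ j ∈ Finset.Ico (i+1) r, μ j * ν i j * (-α j * Real.exp (-α j * (t - t₀)))
            + α i * ∑ j ∈ Finset.Ico (i+1) r, μ j * ν i j * Real.exp (-α j * (t - t₀))
            = p i * ∑ j ∈ Finset.Ico (i+1) r, μ j * ν (i+1) j * Real.exp (-α j * (t - t₀)) := by
          rw [Finset.mul_sum, Finset.mul_sum, ← Finset.sum_add_distrib]
          refine Finset.sum_congr rfl fun j hj => ?_
          have h := hrec j hj
          linear_combination (-(μ j * Real.exp (-α j * (t - t₀)))) * h
        have h1 : α i * (β i / α i) = β i := by field_simp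
        rw [hu'_def, hu_def]
        beta_reduce
        rw [hsplit (fun j => μ j * ν i j * (-α j * Real.exp (-α j * (t - t₀)))),
            hsplit (fun j => μ j * ν i j * Real.exp (-α j * (t - t₀)))]
        rw [hνii]
        linear_combination hsum + h1
      -- comparison
      have hcomp := ode_comp (a := α i) (hder i hir) hu ?_ ?_ t ht
      · -- conclude: ψ i t ≤ u t ≤ bound
        have hSnn : 0 ≤ S := by
          rw [hS]
          apply Finset.sum_nonneg
          intro j hj
          obtain ⟨hj1, hj2⟩ := Finset.mem_Ico.1 hj
          exact mul_nonneg (hμ j hj2) (le_of_lt (hνpos i j (by omega) hj2))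
        have hexp : 0 < Real.exp (-α i * (t - t₀)) := Real.exp_pos _
        have : u t ≤ β i / α i +
            ∑ j ∈ Finset.Ico i r, μ j * ν i j * Real.exp (-α j * (t - t₀)) := by
          rw [hu_def]
          nlinarith
        calc ψ i t ≤ u t := hcomp
          _ ≤ _ := by simpa [hν] using this
      · intro s hs
        have hODE := hode i hi1r s hs
        have hIH := ih (i+1) (by omega) s hs
        have hid' := hid s
        rw [hODE]
        have : p i * ψ (i+1) s ≤ p i * (β (i+1) / α (i+1) +
            ∑ j ∈ Finset.Ico (i+1) r, μ j * ν (i+1) j * Real.exp (-α j * (s - t₀))) := by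
          apply mul_le_mul_of_nonneg_left _ (le_of_lt hpi)
          simpa [hν] using hIH
        linarith
      · -- initial condition
        rw [hinit i hir, hu_def]
        beta_reduce
        rw [hsplit (fun j => μ j * ν i j * Real.exp (-α j * (t₀ - t₀)))]
        simp [hνii]
        rw [hS]
        linarith
  intro i hi t ht
  exact key (r - (i + 1)) i (by omega) t ht
end
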